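/- arXiv:2410.23034 — 2 statements merged into one kernel-verified Lean document; each statement's English description precedes it below -/
import Mathlib

section
/- Let k ≥ 2 be an integer and let G = BS(1,k) = ℤ[1/k] ⋊_φ ℤ. Let a and b be positive integers and n ≥ 1 a natural number. Then (a, tⁿ) is conjugate to (b, tⁿ) in G if and only if there exist m ∈ ℤ and c ∈ ℤ such that b = (kⁿ − 1)·c + kᵐ·a (an equality in ℚ, where kᵐ denotes the m-th integer power of k in ℚ). -/
noncomputable section

/-- `ℤ[1/k]`: the additive subgroup `{a/kⁱ : a ∈ ℤ, i ∈ ℕ}` of `ℚ`. -/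
def zOneOver (k : ℕ) : AddSubgroup ℚ :=
  AddSubgroup.closure {x : ℚ | ∃ (a : ℤ) (i : ℕ), x = (a : ℚ) / (k : ℚ) ^ i}

lemma intCast_mem_zOneOver (k : ℕ) (a : ℤ) : (a : ℚ) ∈ zOneOver k :=
  AddSubgroup.subset_closure ⟨a, 0, by simp⟩

/-- Multiplication by `k` as an additive automorphism of `ℚ`. -/
def mulQ (k : ℕ) (hk : 2 ≤ k) : AddAut ℚ where
  toFun x := (k : ℚ) * x
  invFun x := ((k : ℚ))⁻¹ * x
  left_inv x := by
    have hk0 : (k : ℚ) ≠ 0 := by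
      have : 0 < k := by omega
      exact_mod_cast this.ne'
    field_simp
  right_inv x := by
    have hk0 : (k : ℚ) ≠ 0 := by
      have : 0 < k := by omega
      exact_mod_cast this.ne'
    field_simp
  map_add' x y := by ring

/-- The action of the generator `t` of `ℤ` on `ℚ` (written multiplicatively). -/
def bsAut (k : ℕ) (hk : 2 ≤ k) : MulAut (Multiplicative ℚ) :=
  AddEquiv.toMultiplicative (mulQ k hk)

lemma bsAut_apply (k : ℕ) (hk : 2 ≤ k) (y : Multiplicative ℚ) :
    Multiplicative.toAdd (bsAut k hk y) = (k : ℚ) * Multiplicative.toAdd y := rfl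

lemma bsAut_inv_apply (k : ℕ) (hk : 2 ≤ k) (y : Multiplicative ℚ) :
    Multiplicative.toAdd ((bsAut k hk)⁻¹ y) = ((k : ℚ))⁻¹ * Multiplicative.toAdd y := rfl

lemma bsAut_zpow (k : ℕ) (hk : 2 ≤ k) (n : ℤ) :
    ∀ y : Multiplicative ℚ,
      Multiplicative.toAdd ((bsAut k hk ^ n) y) = (k : ℚ) ^ n * Multiplicative.toAdd y := by
  have hk0 : (k : ℚ) ≠ 0 := by
    have : 0 < k := by omega
    exact_mod_cast this.ne'
  induction n using Int.induction_on with
  | zero => intro y; simp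
  | succ m ih =>
      intro y
      rw [zpow_add_one, MulAut.mul_apply, ih, bsAut_apply, zpow_add_one₀ hk0]
      ring
  | pred m ih =>
      intro y
      rw [zpow_sub_one, MulAut.mul_apply, ih, bsAut_inv_apply, zpow_sub_one₀ hk0]
      ring

lemma zOneOver_smul (k : ℕ) (hk : 2 ≤ k) (n : ℤ) {x : ℚ} (hx : x ∈ zOneOver k) :
    (k : ℚ) ^ n * x ∈ zOneOver k := by
  have hk0 : (k : ℚ) ≠ 0 := by
    have : 0 < k := by omega
    exact_mod_cast this.ne'
  induction hx using AddSubgroup.closure_induction with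
  | mem x hx =>
      obtain ⟨a, i, rfl⟩ := hx
      apply AddSubgroup.subset_closure
      rcases le_or_gt (i : ℤ) n with h | h
      · refine ⟨a * k ^ (n - i).toNat, 0, ?_⟩
        have h1 : ((n - i).toNat : ℤ) = n - i := Int.toNat_of_nonneg (by omega)
        push_cast
        rw [← zpow_natCast (k : ℚ) (n - i).toNat]
        rw [h1]
        rw [zpow_sub₀ hk0]
        field_simp
        rw [zpow_natCast]
      · refine ⟨a, (i - n).toNat, ?_⟩
        have h1 : (((i : ℤ) - n).toNat : ℤ) = (i : ℤ) - n := Int.toNat_of_nonneg (by omega)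
        rw [← zpow_natCast (k : ℚ) i, ← zpow_natCast (k : ℚ) ((i : ℤ) - n).toNat, h1,
          zpow_sub₀ hk0]
        field_simp
  | zero => simpa using (zOneOver k).zero_mem
  | add x y hx hy ihx ihy =>
      rw [mul_add]
      exact add_mem ihx ihy
  | neg x hx ihx =>
      rw [mul_neg]
      exact neg_mem ihx

/-- The ambient group `ℚ ⋊_φ ℤ`, in which `BS(1,k) = ℤ[1/k] ⋊_φ ℤ` sits. -/
abbrev BSAmbient (k : ℕ) (hk : 2 ≤ k) :=
  Multiplicative ℚ ⋊[zpowersHom (MulAut (Multiplicative ℚ)) (bsAut k hk)] Multiplicative ℤ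

/-- The Baumslag–Solitar group `BS(1,k) = ℤ[1/k] ⋊_φ ℤ`, realised as the subgroup of
`ℚ ⋊_φ ℤ` of elements whose first coordinate lies in `ℤ[1/k]`. -/
def BS (k : ℕ) (hk : 2 ≤ k) : Subgroup (BSAmbient k hk) where
  carrier := {g | Multiplicative.toAdd g.left ∈ zOneOver k}
  one_mem' := by
    simpa using (zOneOver k).zero_mem
  mul_mem' := by
    intro a b ha hb
    simp only [Set.mem_setOf_eq, SemidirectProduct.mul_left, toAdd_mul] at *
    refine add_mem ha ?_
    rw [zpowersHom_apply, bsAut_zpow]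
    exact zOneOver_smul k hk _ hb
  inv_mem' := by
    intro a ha
    simp only [Set.mem_setOf_eq, SemidirectProduct.inv_left, zpowersHom_apply, toAdd_inv] at *
    rw [bsAut_zpow, toAdd_inv, mul_neg]
    exact neg_mem (zOneOver_smul k hk _ ha)

/-- The element `(x, tⁿ)` of `BS(1,k)`, for `x ∈ ℤ[1/k]` and `n ∈ ℤ`. -/
def bsElem (k : ℕ) (hk : 2 ≤ k) (x : ℚ) (hx : x ∈ zOneOver k) (n : ℤ) : ↥(BS k hk) :=
  ⟨⟨Multiplicative.ofAdd x, Multiplicative.ofAdd n⟩, hx⟩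

/-!
A conjugator `(y, tᵐ)` turns `(a, tⁿ)` into `(b, tⁿ)` exactly when `b = (1 - kⁿ) y + kᵐ a`
with `y ∈ ℤ[1/k]`. Multiplying this relation by `(kⁿ)ⁱ`, where `kⁱ` clears the denominator of
`y`, makes the coefficient of `1 - kⁿ` an integer and changes `b` only by a multiple of `kⁿ - 1`,
since `kⁿ - 1 ∣ (kⁿ)ⁱ - 1`.
-/

lemma mem_zOneOver_iff {k : ℕ} (hk : k ≠ 0) {x : ℚ} :
    x ∈ zOneOver k ↔ ∃ (d : ℤ) (i : ℕ), x = (d : ℚ) / (k : ℚ) ^ i := by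
  refine ⟨fun hx ↦ ?_, fun hx ↦ AddSubgroup.subset_closure hx⟩
  have hk0 : (k : ℚ) ≠ 0 := Nat.cast_ne_zero.2 hk
  induction hx using AddSubgroup.closure_induction with
  | mem x hx => exact hx
  | zero => exact ⟨0, 0, by simp⟩
  | add x y _ _ ihx ihy =>
      obtain ⟨d₁, i₁, rfl⟩ := ihx
      obtain ⟨d₂, i₂, rfl⟩ := ihy
      refine ⟨d₁ * k ^ i₂ + d₂ * k ^ i₁, i₁ + i₂, ?_⟩
      rw [div_add_div _ _ (pow_ne_zero _ hk0) (pow_ne_zero _ hk0), pow_add]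
      push_cast
      ring
  | neg x _ ihx =>
      obtain ⟨d, i, rfl⟩ := ihx
      exact ⟨-d, i, by push_cast; ring⟩

theorem exists_mem_zOneOver_iff_exists_int {k : ℕ} (hk : k ≠ 0) (n : ℕ) (a : ℚ) (b : ℤ) :
    (∃ y ∈ zOneOver k, ∃ m : ℤ, (b : ℚ) = (1 - (k : ℚ) ^ n) * y + (k : ℚ) ^ m * a) ↔
      ∃ m c : ℤ, (b : ℚ) = ((k : ℚ) ^ n - 1) * (c : ℚ) + (k : ℚ) ^ m * a := by
  refine ⟨?_, fun ⟨m, c, hb⟩ ↦ ⟨-c, neg_mem (intCast_mem_zOneOver k c), m, by rw [hb]; ring⟩⟩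
  rintro ⟨y, hy, m, hb⟩
  rcases n with _ | n
  · exact ⟨m, 0, by simpa using hb⟩
  obtain ⟨d, i, rfl⟩ := (mem_zOneOver_iff hk).1 hy
  obtain ⟨q, hq⟩ := sub_one_dvd_pow_sub_one ((k : ℤ) ^ (n + 1)) i
  have hk0 : (k : ℚ) ≠ 0 := Nat.cast_ne_zero.2 hk
  refine ⟨m + ((n + 1) * i : ℕ), -(d * k ^ (n * i)) - q * b, ?_⟩
  have hq' : ((k : ℚ) ^ (n + 1)) ^ i - 1 = ((k : ℚ) ^ (n + 1) - 1) * q := by exact_mod_cast hq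
  have hcancel : (k : ℚ) ^ i * (d / k ^ i) = d := mul_div_cancel₀ _ (pow_ne_zero _ hk0)
  rw [zpow_add₀ hk0, zpow_natCast, pow_mul]
  push_cast
  linear_combination
    ((k : ℚ) ^ (n + 1)) ^ i * hb - b * hq' + (1 - (k : ℚ) ^ (n + 1)) * k ^ (n * i) * hcancel

section BS

variable {k : ℕ} {hk : 2 ≤ k}

theorem bsElem_mul_bsElem {x y : ℚ} (hx : x ∈ zOneOver k) (hy : y ∈ zOneOver k) (m n : ℤ) :
    bsElem k hk x hx m * bsElem k hk y hy n =
      bsElem k hk (x + (k : ℚ) ^ m * y) (add_mem hx (zOneOver_smul k hk m hy)) (m + n) := by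
  apply Subtype.ext
  apply SemidirectProduct.ext
  · simp only [bsElem, Subgroup.coe_mul, SemidirectProduct.mul_left, zpowersHom_apply, toAdd_ofAdd]
    apply Multiplicative.toAdd.injective
    simp only [toAdd_mul, bsAut_zpow, toAdd_ofAdd]
  · rfl

theorem bsElem_inj {x x' : ℚ} {hx : x ∈ zOneOver k} {hx' : x' ∈ zOneOver k} {n n' : ℤ} :
    bsElem k hk x hx n = bsElem k hk x' hx' n' ↔ x = x' ∧ n = n' := by
  simp [bsElem, SemidirectProduct.ext_iff]

theorem exists_eq_bsElem (g : BS k hk) : ∃ x hx n, g = bsElem k hk x hx n :=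
  ⟨_, g.2, _, rfl⟩

theorem isConj_bsElem_iff {x x' : ℚ} (hx : x ∈ zOneOver k) (hx' : x' ∈ zOneOver k) (n : ℤ) :
    IsConj (bsElem k hk x hx n) (bsElem k hk x' hx' n) ↔
      ∃ y ∈ zOneOver k, ∃ m : ℤ, x' = (1 - (k : ℚ) ^ n) * y + (k : ℚ) ^ m * x := by
  simp only [isConj_iff, mul_inv_eq_iff_eq_mul]
  constructor
  · rintro ⟨g, hg⟩
    obtain ⟨y, hy, m, rfl⟩ := exists_eq_bsElem g
    rw [bsElem_mul_bsElem, bsElem_mul_bsElem, bsElem_inj] at hg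
    exact ⟨y, hy, m, by linear_combination -hg.1⟩
  · rintro ⟨y, hy, m, rfl⟩
    refine ⟨bsElem k hk y hy m, ?_⟩
    rw [bsElem_mul_bsElem, bsElem_mul_bsElem, bsElem_inj]
    constructor <;> ring

end BS

theorem bs_conjugate_iff_general (k : ℕ) (hk : 2 ≤ k) (a b : ℤ) (n : ℕ) :
    IsConj (bsElem k hk (a : ℚ) (intCast_mem_zOneOver k a) (n : ℤ))
        (bsElem k hk (b : ℚ) (intCast_mem_zOneOver k b) (n : ℤ)) ↔
      ∃ m c : ℤ, (b : ℚ) = ((k : ℚ) ^ n - 1) * (c : ℚ) + (k : ℚ) ^ m * (a : ℚ) := by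
  rw [isConj_bsElem_iff, zpow_natCast]
  exact exists_mem_zOneOver_iff_exists_int (by omega) n a b

/-- In `G = BS(1,k) = ℤ[1/k] ⋊_φ ℤ` (`k ≥ 2`), for positive integers `a, b`
and `n ≥ 1`, the elements `(a, tⁿ)` and `(b, tⁿ)` are conjugate if and only if there are
`m ∈ ℤ` and `c ∈ ℤ` with `b = (kⁿ - 1)·c + kᵐ·a` in `ℚ`. -/
theorem bs_conjugate_iff (k : ℕ) (hk : 2 ≤ k) (a b : ℤ) (ha : 0 < a) (hb : 0 < b)
    (n : ℕ) (hn : 1 ≤ n) :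
    IsConj (bsElem k hk (a : ℚ) (intCast_mem_zOneOver k a) (n : ℤ))
        (bsElem k hk (b : ℚ) (intCast_mem_zOneOver k b) (n : ℤ)) ↔
      ∃ m c : ℤ, (b : ℚ) = ((k : ℚ) ^ n - 1) * (c : ℚ) + (k : ℚ) ^ m * (a : ℚ) :=
  bs_conjugate_iff_general k hk a b n
end
end

section
/- Let k ≥ 2 be an integer and let G = BS(1,k) = ℤ[1/k] ⋊_φ ℤ. Then for every finite subset A of G there exists g ∈ G such that the elements of g·A lie in pairwise distinct conjugacy classes of G; that is, c(g·A) = |A|. -/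
noncomputable section

/-!
Conjugate elements `(x, tⁿ)` and `(x', tⁿ')` of `BS(1,k)` have `n = n'` and
`x' = kᵐ x + (1 - kⁿ) y` for some `m ∈ ℤ`, `y ∈ ℤ[1/k]`. For every pair `a ≠ b` of `A` with
the same `n` choose a prime `q` such that `k` has prime order `r` modulo `q`, with different `r`
for different pairs. Translate by `g = (z / kⁱ, tᵖ)`, where `kⁱ` clears the denominators of `A`
and `p ≡ -n (mod r)` for every pair (Chinese remainder theorem). Then `q ∣ 1 - k^(p + n)`, so if
`ga` and `gb` were conjugate, the integers `kⁱ x(ga)` and `kⁱ x(gb)` would lie in one orbit of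
multiplication by `k` modulo `q`. This excludes at most `r < q` residues of `z` modulo `q`, and
a second application of the Chinese remainder theorem chooses `z` outside all of them. Such `q`
exist for every prime `r > k`: take a prime factor of `1 + k + ⋯ + k^(r-1)`.
-/

lemma intCast_div_pow_mem_zOneOver (k : ℕ) (a : ℤ) (i : ℕ) : (a : ℚ) / (k : ℚ) ^ i ∈ zOneOver k :=
  AddSubgroup.subset_closure ⟨a, i, rfl⟩

lemma exists_eq_intCast_div_pow_of_mem_zOneOver {k : ℕ} (hk : k ≠ 0) {x : ℚ}
    (hx : x ∈ zOneOver k) : ∃ (a : ℤ) (i : ℕ), x = (a : ℚ) / (k : ℚ) ^ i := by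
  have hk0 : (k : ℚ) ≠ 0 := by exact_mod_cast hk
  induction hx using AddSubgroup.closure_induction with
  | mem x hx => exact hx
  | zero => exact ⟨0, 0, by simp⟩
  | add x y _ _ hx hy =>
    obtain ⟨a, i, rfl⟩ := hx
    obtain ⟨b, j, rfl⟩ := hy
    refine ⟨a * k ^ j + b * k ^ i, i + j, ?_⟩
    field_simp
    push_cast
    ring
  | neg x _ hx =>
    obtain ⟨a, i, rfl⟩ := hx
    exact ⟨-a, i, by push_cast; ring⟩

lemma exists_mul_pow_eq_intCast {ι : Type*} {k : ℕ} (hk : k ≠ 0) (s : Finset ι) (f : ι → ℚ)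
    (hf : ∀ a ∈ s, f a ∈ zOneOver k) : ∃ (i : ℕ) (c : ι → ℤ), ∀ a ∈ s, f a * (k : ℚ) ^ i = c a := by
  classical
  have hk0 : (k : ℚ) ≠ 0 := by exact_mod_cast hk
  choose! num den hnum using fun a ha => exists_eq_intCast_div_pow_of_mem_zOneOver hk (hf a ha)
  refine ⟨s.sup den, fun a => num a * k ^ (s.sup den - den a), fun a ha => ?_⟩
  obtain ⟨e, he⟩ := Nat.exists_eq_add_of_le (Finset.le_sup (f := den) ha)
  simp only [hnum a ha, he, Nat.add_sub_cancel_left]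
  field_simp
  push_cast
  ring

lemma exists_intCast_eq_pow_mul_of_eq_zpow_mul_add {k q : ℕ} [Fact q.Prime]
    (hkq : (k : ZMod q) ≠ 0) {u v m : ℤ} {y : ℚ} (hy : y ∈ zOneOver k)
    (h : (u : ℚ) = (k : ℚ) ^ m * v + q * y) : ∃ j : ℕ, (u : ZMod q) = (k : ZMod q) ^ j * v := by
  have hk : k ≠ 0 := by rintro rfl; simp at hkq
  have hk0 : (k : ℚ) ≠ 0 := by exact_mod_cast hk
  obtain ⟨b, s, rfl⟩ := exists_eq_intCast_div_pow_of_mem_zOneOver hk hy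
  obtain ⟨e, t, rfl⟩ : ∃ e t : ℕ, m = e - t :=
    ⟨m.toNat, (-m).toNat, (Int.toNat_sub_toNat_neg m).symm⟩
  have hZ : (k : ℤ) ^ (t + s) * u = (k : ℤ) ^ (e + s) * v + q * (b * k ^ t) := by
    have hQ : (k : ℚ) ^ (t + s) * u = (k : ℚ) ^ (e + s) * v + q * (b * k ^ t) := by
      rw [h, zpow_sub₀ hk0, zpow_natCast, zpow_natCast]
      field_simp
      ring
    exact_mod_cast hQ
  have hZq : (k : ZMod q) ^ (t + s) * u = (k : ZMod q) ^ (e + s) * v := by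
    simpa using congrArg (Int.cast : ℤ → ZMod q) hZ
  -- multiply by `k ^ ((t + s) * (q - 2))`, the inverse of `k ^ (t + s)` by Fermat
  have hq : q - 1 = q - 2 + 1 := by have := (Fact.out : q.Prime).two_le; omega
  refine ⟨(t + s) * (q - 2) + (e + s), ?_⟩
  calc (u : ZMod q) = ((k : ZMod q) ^ (q - 1)) ^ (t + s) * u := by
        rw [ZMod.pow_card_sub_one_eq_one hkq, one_pow, one_mul]
    _ = (k : ZMod q) ^ ((t + s) * (q - 2)) * ((k : ZMod q) ^ (t + s) * u) := by
        rw [hq]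
        ring
    _ = _ := by
        rw [hZq]
        ring

lemma exists_forall_add_ne_pow_mul_add {F : Type*} [Field F] [Fintype F] {κ : F}
    (hκ : 0 < orderOf κ) (hκF : orderOf κ < Fintype.card F) {α β : F} (hαβ : α ≠ β) :
    ∃ w : F, ∀ j : ℕ, w + β ≠ κ ^ j * (w + α) := by
  classical
  -- when `κ ^ j ≠ 1` the equation `w + β = κ ^ j * (w + α)` has exactly one solution
  obtain ⟨w, hw⟩ : ∃ w, w ∉ (Finset.range (orderOf κ)).image
      fun j => (κ ^ j * α - β) / (1 - κ ^ j) := by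
    obtain ⟨w, -, hw⟩ := Finset.exists_mem_notMem_of_card_lt_card (t := (Finset.univ : Finset F))
      (Finset.card_image_le.trans_lt (by rwa [Finset.card_range, Finset.card_univ]))
    exact ⟨w, hw⟩
  refine ⟨w, fun j hj => ?_⟩
  rw [← pow_mod_orderOf] at hj
  by_cases h1 : κ ^ (j % orderOf κ) = 1
  · rw [h1, one_mul] at hj
    exact hαβ (add_left_cancel hj).symm
  · refine hw (Finset.mem_image.mpr ⟨j % orderOf κ, Finset.mem_range.mpr (Nat.mod_lt _ hκ), ?_⟩)
    rw [div_eq_iff (sub_ne_zero.mpr (Ne.symm h1))]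
    linear_combination -hj

lemma exists_prime_orderOf_natCast_eq {k r : ℕ} (hk : 2 ≤ k) (hr : r.Prime) (hkr : k < r) :
    ∃ q : ℕ, q.Prime ∧ orderOf (k : ZMod q) = r := by
  have := Fact.mk hr
  set M := ∑ j ∈ Finset.range r, k ^ j
  have hM : 1 < M := by
    have h2 : 2 ≤ r := hr.two_le
    calc 1 < ∑ j ∈ Finset.range 2, k ^ j := by simp; omega
      _ ≤ M := Finset.sum_le_sum_of_subset (Finset.range_subset_range.mpr h2)
  set q := M.minFac
  have hq : q.Prime := Nat.minFac_prime hM.ne'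
  have := Fact.mk hq
  have hMq : ∑ j ∈ Finset.range r, (k : ZMod q) ^ j = 0 := by
    simpa [M] using (ZMod.natCast_eq_zero_iff M q).mpr (Nat.minFac_dvd M)
  refine ⟨q, hq, orderOf_eq_prime ?_ fun hk1 => ?_⟩
  · have := geom_sum_mul (k : ZMod q) r
    rw [hMq, zero_mul] at this
    exact (sub_eq_zero.mp this.symm)
  · -- `k ≡ 1 (mod q)` forces `M ≡ r (mod q)`, so `q = r ∣ k - 1`, which is too small
    have hqr : q = r := by
      rw [hk1] at hMq
      simp only [one_pow, Finset.sum_const, Finset.card_range, nsmul_eq_mul, mul_one] at hMq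
      exact (Nat.prime_dvd_prime_iff_eq hq hr).mp ((ZMod.natCast_eq_zero_iff r q).mp hMq)
    have hdvd : q ∣ k - 1 := by
      rw [← ZMod.natCast_eq_zero_iff, Nat.cast_sub (by omega), hk1, Nat.cast_one, sub_self]
    have := Nat.le_of_dvd (by omega) hdvd
    omega

lemma ZMod.intCast_ne_intCast_of_natAbs_sub_lt {q : ℕ} {u v : ℤ} (huv : u ≠ v)
    (h : (u - v).natAbs < q) : (u : ZMod q) ≠ v := by
  rw [Ne, ZMod.intCast_eq_intCast_iff_dvd_sub]
  intro hdvd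
  have := Nat.eq_zero_of_dvd_of_lt (Int.natAbs_dvd_natAbs.mpr hdvd)
    (by rwa [← Int.natAbs_neg, neg_sub])
  omega

lemma exists_natCast_eq_of_pairwise_coprime {ι : Type*} [Fintype ι] {m : ι → ℕ}
    (hm0 : ∀ i, m i ≠ 0) (hm : Pairwise fun i j => (m i).Coprime (m j))
    (w : ∀ i, ZMod (m i)) (L : ℕ) :
    ∃ z : ℕ, L ≤ z ∧ ∀ i, (z : ZMod (m i)) = w i := by
  have hprod : ∏ i, m i ≠ 0 := Finset.prod_ne_zero_iff.mpr fun i _ => hm0 i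
  have : NeZero (∏ i, m i) := ⟨hprod⟩
  refine ⟨((ZMod.prodEquivPi m hm).symm w).val + (∏ i, m i) * L, ?_, fun i => ?_⟩
  · nlinarith [Nat.one_le_iff_ne_zero.mpr hprod]
  · have : NeZero (m i) := ⟨hm0 i⟩
    have hdvd : m i ∣ ∏ j, m j := Finset.dvd_prod_of_mem m (Finset.mem_univ i)
    rw [Nat.cast_add, Nat.cast_mul, (ZMod.natCast_eq_zero_iff _ _).mpr hdvd, zero_mul, add_zero,
      ZMod.natCast_val, ← ZMod.castHom_apply (h := hdvd), ← ZMod.prodEquivPi_apply m hm,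
      RingEquiv.apply_symm_apply]

lemma exists_nat_forall_dvd_add_of_pairwise_coprime {ι : Type*} [Fintype ι] {m : ι → ℕ}
    (hm0 : ∀ i, m i ≠ 0) (hm : Pairwise fun i j => (m i).Coprime (m j)) (c : ι → ℤ) :
    ∃ p : ℕ, ∀ i, 0 ≤ (p : ℤ) + c i ∧ (m i : ℤ) ∣ p + c i := by
  obtain ⟨p, hp_large, hp⟩ := exists_natCast_eq_of_pairwise_coprime hm0 hm
    (fun i => -(c i : ZMod (m i))) (∑ i, (c i).natAbs)
  refine ⟨p, fun i => ⟨?_, ?_⟩⟩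
  · have := Finset.single_le_sum (f := fun j => (c j).natAbs) (fun j _ => Nat.zero_le _)
      (Finset.mem_univ i)
    omega
  · rw [← ZMod.intCast_zmod_eq_zero_iff_dvd]
    push_cast
    rw [hp i, neg_add_cancel]

lemma exists_injective_orderOf_natCast_prime {k : ℕ} (hk : 2 ≤ k) (ι : Type*) [Finite ι] (B : ℕ) :
    ∃ q : ι → ℕ, (∀ t, (q t).Prime ∧ (orderOf (k : ZMod (q t))).Prime ∧
      B < orderOf (k : ZMod (q t))) ∧ Function.Injective fun t => orderOf (k : ZMod (q t)) := by
  obtain ⟨e, he⟩ := Countable.exists_injective_nat ι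
  have hr (t : ι) := Nat.add_two_le_nth_prime (B + k + e t)
  choose q hq hqr using fun t =>
    exists_prime_orderOf_natCast_eq hk (Nat.prime_nth_prime (B + k + e t)) (by have := hr t; omega)
  refine ⟨q, fun t => ⟨hq t, hqr t ▸ Nat.prime_nth_prime _, by rw [hqr t]; have := hr t; omega⟩, ?_⟩
  intro t t' h
  simp only [hqr] at h
  exact he (by simpa using (Nat.nth_strictMono Nat.infinite_setOfPred_prime).injective h)

lemma ZMod.exists_forall_add_ne_pow_mul_add_of_natAbs_sub_lt {q : ℕ} [Fact q.Prime] {κ : ZMod q}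
    (hκ : 0 < orderOf κ) (p : ℕ) {a b : ℤ} (hab : a ≠ b) (hlt : (a - b).natAbs < q) :
    ∃ w : ZMod q, ∀ j : ℕ, w + κ ^ p * b ≠ κ ^ j * (w + κ ^ p * a) := by
  have hκq : orderOf κ < Fintype.card (ZMod q) := by
    rw [ZMod.card]
    exact ZMod.orderOf_lt (Fact.out : q.Prime).one_lt κ
  refine exists_forall_add_ne_pow_mul_add hκ hκq fun h => ?_
  exact ZMod.intCast_ne_intCast_of_natAbs_sub_lt hab hlt
    (mul_left_cancel₀ (pow_ne_zero p (orderOf_pos_iff.mp hκ).isUnit.ne_zero) h)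

namespace BS

variable {k : ℕ} {hk : 2 ≤ k}

/-- `x g` and `n g` are the coordinates of `g = (x, tⁿ)`. -/
def x (g : BS k hk) : ℚ := Multiplicative.toAdd g.1.left

def n (g : BS k hk) : ℤ := Multiplicative.toAdd g.1.right

lemma x_mem (g : BS k hk) : x g ∈ zOneOver k := g.2

@[simp] lemma x_bsElem (y : ℚ) (hy : y ∈ zOneOver k) (m : ℤ) : x (bsElem k hk y hy m) = y := rfl

lemma ext {a b : BS k hk} (hx : x a = x b) (hn : n a = n b) : a = b :=
  Subtype.ext (SemidirectProduct.ext hx hn)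

lemma x_mul (a b : BS k hk) : x (a * b) = x a + (k : ℚ) ^ n a * x b := by
  change Multiplicative.toAdd (a.1 * b.1).left = _
  rw [SemidirectProduct.mul_left, toAdd_mul, zpowersHom_apply, bsAut_zpow]
  rfl

lemma n_mul (a b : BS k hk) : n (a * b) = n a + n b := rfl

lemma x_inv (a : BS k hk) : x a⁻¹ = -((k : ℚ) ^ (-n a) * x a) := by
  change Multiplicative.toAdd (a.1⁻¹).left = _
  rw [SemidirectProduct.inv_left, zpowersHom_apply, bsAut_zpow, toAdd_inv, toAdd_inv, mul_neg]
  rfl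

lemma n_inv (a : BS k hk) : n a⁻¹ = -n a := rfl

lemma n_eq_of_isConj {a b : BS k hk} (h : IsConj a b) : n a = n b := by
  obtain ⟨c, rfl⟩ := isConj_iff.mp h
  rw [n_mul, n_mul, n_inv]
  ring

lemma exists_x_eq_of_isConj {a b : BS k hk} (h : IsConj a b) :
    ∃ m : ℤ, ∃ y ∈ zOneOver k, x b = (k : ℚ) ^ m * x a + (1 - (k : ℚ) ^ n a) * y := by
  have hk0 : (k : ℚ) ≠ 0 := by positivity
  obtain ⟨c, rfl⟩ := isConj_iff.mp h
  refine ⟨n c, x c, x_mem c, ?_⟩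
  rw [x_mul, x_mul, x_inv, n_mul, zpow_add₀ hk0, zpow_neg]
  field_simp
  ring

lemma exists_intCast_eq_pow_mul_of_isConj {a b : BS k hk} (hab : IsConj a b) {q : ℕ}
    [Fact q.Prime] (hkq : (k : ZMod q) ≠ 0) (hn : 0 ≤ n a)
    (hord : (orderOf (k : ZMod q) : ℤ) ∣ n a) {i : ℕ} {u v : ℤ}
    (hu : x a * (k : ℚ) ^ i = u) (hv : x b * (k : ℚ) ^ i = v) :
    ∃ j : ℕ, (v : ZMod q) = (k : ZMod q) ^ j * u := by
  obtain ⟨m, y, hy, hxb⟩ := exists_x_eq_of_isConj hab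
  obtain ⟨N, hN⟩ := Int.eq_ofNat_of_zero_le hn
  rw [hN, Int.natCast_dvd_natCast, orderOf_dvd_iff_pow_eq_one] at hord
  obtain ⟨d, hd⟩ : (q : ℤ) ∣ (k : ℤ) ^ N - 1 := by
    rw [← ZMod.intCast_zmod_eq_zero_iff_dvd]
    push_cast
    rw [hord, sub_self]
  have hdq : (k : ℚ) ^ N - 1 = q * d := by exact_mod_cast hd
  have hmem : -(d * ((k : ℚ) ^ (i : ℤ) * y)) ∈ zOneOver k := by
    simpa [zsmul_eq_mul] using neg_mem (zsmul_mem (zOneOver_smul k hk i hy) d)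
  refine exists_intCast_eq_pow_mul_of_eq_zpow_mul_add hkq (m := m) hmem ?_
  rw [hN, zpow_natCast] at hxb
  rw [← hu, ← hv, hxb, zpow_natCast]
  linear_combination (-(k : ℚ) ^ i * y) * hdq

lemma not_isConj_mul_mul {g a b : BS k hk} {q : ℕ} [Fact q.Prime] (hkq : (k : ZMod q) ≠ 0)
    {i p : ℕ} {z ca cb : ℤ} (hg : x g * (k : ℚ) ^ i = z) (hgn : n g = p)
    (ha : x a * (k : ℚ) ^ i = ca) (hb : x b * (k : ℚ) ^ i = cb) (hn : 0 ≤ p + n a)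
    (hord : (orderOf (k : ZMod q) : ℤ) ∣ p + n a)
    (hz : ∀ j : ℕ, (z : ZMod q) + k ^ p * cb ≠ k ^ j * (z + k ^ p * ca)) :
    ¬ IsConj (g * a) (g * b) := by
  have hxg (c : BS k hk) : x (g * c) * (k : ℚ) ^ i = x g * (k : ℚ) ^ i + k ^ p * (x c * k ^ i) := by
    rw [x_mul, hgn, zpow_natCast]
    ring
  intro hab
  obtain ⟨j, hj⟩ := exists_intCast_eq_pow_mul_of_isConj hab hkq (by rwa [n_mul, hgn])
    (by rwa [n_mul, hgn]) (u := z + k ^ p * ca) (v := z + k ^ p * cb)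
    (by rw [hxg, hg, ha]; push_cast; ring) (by rw [hxg, hg, hb]; push_cast; ring)
  push_cast at hj
  exact hz j hj

theorem exists_injOn_conjClassesMk_mul {A : Set (BS k hk)} (hA : A.Finite) :
    ∃ g : BS k hk, A.InjOn fun a => ConjClasses.mk (g * a) := by
  classical
  have hk0 : (k : ℚ) ≠ 0 := by positivity
  set S := hA.toFinset
  obtain ⟨i, c, hc⟩ := exists_mul_pow_eq_intCast (by omega : k ≠ 0) S x fun a _ => x_mem a
  set P := S.offDiag.filter fun ab => n ab.1 = n ab.2
  obtain ⟨q, hq, hr_inj⟩ := exists_injective_orderOf_natCast_prime hk P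
    (P.sup fun ab => (c ab.1 - c ab.2).natAbs)
  set r := fun t : P => orderOf (k : ZMod (q t))
  have (t : P) : Fact (q t).Prime := ⟨(hq t).1⟩
  obtain ⟨p, hp⟩ := exists_nat_forall_dvd_add_of_pairwise_coprime (m := r)
    (fun t => (hq t).2.1.ne_zero)
    (fun t t' h => (Nat.coprime_primes (hq t).2.1 (hq t').2.1).mpr (hr_inj.ne h))
    fun t => n t.1.1
  have hsep (t : P) : ∃ w : ZMod (q t), ∀ j : ℕ,
      w + k ^ p * c t.1.2 ≠ k ^ j * (w + k ^ p * c t.1.1) := by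
    obtain ⟨hab, hn⟩ := Finset.mem_filter.mp t.2
    obtain ⟨ha, hb, hne⟩ := Finset.mem_offDiag.mp hab
    have hc_ne : c t.1.1 ≠ c t.1.2 := fun h => hne <|
      ext (mul_right_cancel₀ (pow_ne_zero i hk0) (by rw [hc _ ha, hc _ hb, h])) hn
    exact ZMod.exists_forall_add_ne_pow_mul_add_of_natAbs_sub_lt (hq t).2.1.pos p hc_ne
      (((Finset.le_sup (f := fun ab => (c ab.1 - c ab.2).natAbs) t.2).trans_lt
        (hq t).2.2).trans (ZMod.orderOf_lt (hq t).1.one_lt _))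
  choose w hw using hsep
  obtain ⟨z, -, hz⟩ := exists_natCast_eq_of_pairwise_coprime (m := q)
    (fun t => (hq t).1.ne_zero)
    (fun t t' h => (Nat.coprime_primes (hq t).1 (hq t').1).mpr
      fun h' => hr_inj.ne h (by simp only [r]; rw [h'])) w 0
  refine ⟨bsElem k hk ((z : ℤ) / (k : ℚ) ^ i) (intCast_div_pow_mem_zOneOver k z i) p,
    fun a ha b hb hab => ?_⟩
  replace hab := ConjClasses.mk_eq_mk_iff_isConj.mp hab
  by_contra hne
  have haS : a ∈ S := hA.mem_toFinset.mpr ha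
  have hbS : b ∈ S := hA.mem_toFinset.mpr hb
  have hP : (a, b) ∈ P := Finset.mem_filter.mpr ⟨Finset.mem_offDiag.mpr ⟨haS, hbS, hne⟩,
    by simpa [n_mul] using n_eq_of_isConj hab⟩
  refine not_isConj_mul_mul (orderOf_pos_iff.mp (hq ⟨_, hP⟩).2.1.pos).isUnit.ne_zero (z := z)
    ?_ rfl (hc a haS) (hc b hbS) (hp ⟨_, hP⟩).1 (hp ⟨_, hP⟩).2 ?_ hab
  · rw [x_bsElem, div_mul_cancel₀ _ (pow_ne_zero i hk0)]
  · intro j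
    rw [Int.cast_natCast, hz ⟨_, hP⟩]
    exact hw ⟨_, hP⟩ j

end BS

/-- Let `k ≥ 2` and `G = BS(1,k) = ℤ[1/k] ⋊_φ ℤ`.  For every finite subset
`A` of `G` there is `g ∈ G` such that the elements of `g·A` lie in pairwise distinct conjugacy
classes; that is, `c(g·A) = |A|`. -/
theorem bs_translate_finite_set_distinct_classes (k : ℕ) (hk : 2 ≤ k)
    (A : Set ↥(BS k hk)) (hA : A.Finite) :
    ∃ g : ↥(BS k hk),
      (ConjClasses.mk '' ((fun x => g * x) '' A)).ncard = A.ncard := by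
  obtain ⟨g, hg⟩ := BS.exists_injOn_conjClassesMk_mul hA
  exact ⟨g, by rw [Set.image_image, hg.ncard_image]⟩
end
end
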